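/- Let λ : ℝ² → ℝ be continuous with λ(0,0) ≠ 0, whose zero set has Lebesgue measure zero, and suppose λ vanishes at every point of the ellipse {(x,y) : x² - xy + y² = 2}. Then there is no function f : ℝ → ℝ such that λ(x,y) = f(x)f(y)f(x-y) for all x, y. -/

import Mathlib

/-!
Let `Z` be the zero set of `f`. Then `Z × ℝ` lies in the zero set of `λ`, so `Z` is null. For
`0 ≤ a ≤ 1/2` let `b > a` solve `a² + ab + b² = 2`; then `(a + b, a)` lies on the ellipse, so one
of `a`, `b`, `a + b` is in `Z`. Both `b ↦ a` and `a + b ↦ -a` are given by the same branch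
`upperRoot` of the conic, which is smooth, so `[0, 1/2]` is covered by `Z`, `upperRoot '' Z` and
`-upperRoot '' Z`: three null sets.
-/

open MeasureTheory Set

-- The larger root `t` of `s² + s t + t² = 2`.
noncomputable def upperRoot (s : ℝ) : ℝ := (-s + √(8 - 3 * s ^ 2)) / 2

lemma sq_add_mul_upperRoot_add_sq {s : ℝ} (hs : 3 * s ^ 2 ≤ 8) :
    s ^ 2 + s * upperRoot s + upperRoot s ^ 2 = 2 := by
  have := Real.sq_sqrt (by linarith : 0 ≤ 8 - 3 * s ^ 2)
  unfold upperRoot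
  linear_combination this / 4

lemma upperRoot_eq_of_sq_add_mul_add_sq {s t : ℝ} (h : s ^ 2 + s * t + t ^ 2 = 2)
    (hst : 0 ≤ s + 2 * t) : upperRoot s = t := by
  have : 8 - 3 * s ^ 2 = (s + 2 * t) ^ 2 := by linear_combination -4 * h
  rw [upperRoot, this, Real.sqrt_sq hst]
  ring

lemma differentiableOn_upperRoot : DifferentiableOn ℝ upperRoot {s | 3 * s ^ 2 < 8} := by
  intro s hs
  have hpos : 8 - 3 * s ^ 2 ≠ 0 := (sub_pos.2 hs).ne'
  unfold upperRoot
  fun_prop (disch := exact hpos)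

lemma measure_eq_zero_of_prod_univ_eq_zero {α β : Type*} [MeasurableSpace α] [MeasurableSpace β]
    {μ : Measure α} {ν : Measure β} [SFinite ν] [NeZero ν] {s : Set α}
    (h : μ.prod ν (s ×ˢ univ) = 0) : μ s = 0 := by
  simpa [Measure.prod_prod, NeZero.ne ν] using h

lemma Icc_subset_of_ellipse {Z : Set ℝ}
    (hZ : ∀ x y : ℝ, x ^ 2 - x * y + y ^ 2 = 2 → x ∈ Z ∨ y ∈ Z ∨ x - y ∈ Z) :
    Icc (0 : ℝ) (1 / 2) ⊆
      Z ∪ upperRoot '' (Z ∩ {s | 3 * s ^ 2 < 8}) ∪ -(upperRoot '' (Z ∩ {s | 3 * s ^ 2 < 8})) := by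
  rintro a ⟨ha0, ha1⟩
  set b := upperRoot a
  have hab : a ^ 2 + a * b + b ^ 2 = 2 := sq_add_mul_upperRoot_add_sq (by nlinarith)
  have hr := Real.sq_sqrt (by nlinarith : (0 : ℝ) ≤ 8 - 3 * a ^ 2)
  have hr0 := Real.sqrt_nonneg (8 - 3 * a ^ 2)
  have hba : a < b := by simp only [b, upperRoot]; nlinarith
  -- `8 = 4 (a² + ab + b²) = 3 (a + b)² + (b - a)² = 3 b² + (2a + b)²`
  have hsum : 3 * (a + b) ^ 2 < 8 := by nlinarith [mul_pos (sub_pos.2 hba) (sub_pos.2 hba)]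
  have hb : 3 * b ^ 2 < 8 := by
    have : 0 < 2 * a + b := by linarith
    nlinarith [mul_pos this this]
  rcases hZ (a + b) a (by linear_combination hab) with h | h | h
  · refine Or.inr ⟨a + b, ⟨h, hsum⟩, ?_⟩
    exact upperRoot_eq_of_sq_add_mul_add_sq (t := -a) (by linear_combination hab) (by linarith)
  · exact Or.inl (Or.inl h)
  · rw [add_sub_cancel_left] at h
    refine Or.inl (Or.inr ⟨b, ⟨h, hb⟩, ?_⟩)
    exact upperRoot_eq_of_sq_add_mul_add_sq (by linear_combination hab) (by linarith)

theorem no_product_decomposition_general (lam : ℝ × ℝ → ℝ)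
    (hzero : volume {p : ℝ × ℝ | lam p = 0} = 0)
    (hellipse : ∀ x y : ℝ, x ^ 2 - x * y + y ^ 2 = 2 → lam (x, y) = 0) :
    ¬ ∃ f : ℝ → ℝ, ∀ x y : ℝ, lam (x, y) = f x * f y * f (x - y) := by
  rintro ⟨f, hf⟩
  set Z := {t | f t = 0}
  have hZ : volume Z = 0 := by
    refine measure_eq_zero_of_prod_univ_eq_zero (ν := (volume : Measure ℝ)) ?_
    rw [← Measure.volume_eq_prod]
    refine measure_mono_null (fun p hp => ?_) hzero
    simp_all [Z]
  have hcover := Icc_subset_of_ellipse (Z := Z) fun x y hxy => by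
    simpa [Z, hf, or_assoc] using hellipse x y hxy
  have himage : volume (upperRoot '' (Z ∩ {s | 3 * s ^ 2 < 8})) = 0 :=
    addHaar_image_eq_zero_of_differentiableOn_of_addHaar_eq_zero volume
      (differentiableOn_upperRoot.mono inter_subset_right) (measure_mono_null inter_subset_left hZ)
  have : volume (Icc (0 : ℝ) (1 / 2)) = 0 :=
    measure_mono_null hcover <| measure_union_null (measure_union_null hZ himage)
      (by rwa [Measure.measure_neg])
  norm_num at this

/-- A continuous bivariate function, nonzero at the origin, whose zero set has measure zero
but contains the ellipse `x² - xy + y² = 2`, admits no decomposition `f(x)f(y)f(x-y)`. -/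
theorem no_product_decomposition (lam : ℝ × ℝ → ℝ)
    (hcont : Continuous lam)
    (h0 : lam (0, 0) ≠ 0)
    (hzero : volume {p : ℝ × ℝ | lam p = 0} = 0)
    (hellipse : ∀ x y : ℝ, x ^ 2 - x * y + y ^ 2 = 2 → lam (x, y) = 0) :
    ¬ ∃ f : ℝ → ℝ, ∀ x y : ℝ, lam (x, y) = f x * f y * f (x - y) :=
  no_product_decomposition_general lam hzero hellipse
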